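/- The relation r is an equivalence relation on Y, the quotient map q : Y → X is a surjective local homeomorphism, X is compact, and X is locally Hausdorff, i.e., every point of X has an open neighborhood whose subspace topology is Hausdorff. -/

import Mathlib

/-!
Away from the glued open segments `{0, -2, 2} × (0, 2)`, every point of `Y` lies on a diagonal
`|x| = t`, so `Y` meets the open set `{|x| ≠ t}` exactly in the glued segments. The saturation of
an open `U = Y ∩ W` is therefore `U` together with the glued points `(x, t)` such that
`(c, t) ∈ W` for some `c ∈ {0, -2, 2}`, which is open; so `q` is open. Distinct equivalent points
are at distance `2`, so `q` is injective on balls of radius `1`. `X` is the image of the compact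
set formed by the diagonals, `{0} × [0, 1]` and `{2} × [1, 2]`. Finally `(x, t) ↦ (x (4 - x²), t)`
is constant on classes and identifies, besides, only the two tips `(±2, 2)`, whose classes are
singletons: the complement of either tip is open and injects continuously into `ℝ²`.
-/

/-- The space `Y ⊆ ℝ²` for the broken heart: the union of the five segments
`{(0,t) : 0 ≤ t < 2}`, `{(-t,t) : 0 ≤ t ≤ 2}`, `{(t,t) : 0 ≤ t ≤ 2}`,
`{(-2,t) : 0 < t ≤ 2}` and `{(2,t) : 0 < t ≤ 2}`, with the subspace topology. -/
def heartY : Set (ℝ × ℝ) :=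
  ((fun t : ℝ => ((0 : ℝ), t)) '' Set.Ico 0 2) ∪
  ((fun t : ℝ => (-t, t)) '' Set.Icc 0 2) ∪
  ((fun t : ℝ => (t, t)) '' Set.Icc 0 2) ∪
  ((fun t : ℝ => ((-2 : ℝ), t)) '' Set.Ioc 0 2) ∪
  ((fun t : ℝ => ((2 : ℝ), t)) '' Set.Ioc 0 2)

/-- The relation `r` on `Y`: `r w w'` iff `w = w'`, or there is `t ∈ (0,2)` such that
both `w` and `w'` belong to `{(0,t), (-2,t), (2,t)}`. -/
def heartRel (w w' : heartY) : Prop :=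
  w = w' ∨ ∃ t : ℝ, 0 < t ∧ t < 2 ∧
    (w : ℝ × ℝ) ∈ ({((0 : ℝ), t), ((-2 : ℝ), t), ((2 : ℝ), t)} : Set (ℝ × ℝ)) ∧
    (w' : ℝ × ℝ) ∈ ({((0 : ℝ), t), ((-2 : ℝ), t), ((2 : ℝ), t)} : Set (ℝ × ℝ))

open Set

section QuotientMaps

variable {Y : Type*} [TopologicalSpace Y] {r : Y → Y → Prop}

theorem equivalence_eq_or_and_eq {α β : Type*} (P : α → Prop) (f : α → β) :
    Equivalence fun u v => u = v ∨ (P u ∧ P v ∧ f u = f v) where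
  refl _ := Or.inl rfl
  symm
    | .inl h => .inl h.symm
    | .inr ⟨hu, hv, h⟩ => .inr ⟨hv, hu, h.symm⟩
  trans
    | .inl rfl, h => h
    | h, .inl rfl => h
    | .inr ⟨hu, _, h⟩, .inr ⟨_, hw, h'⟩ => .inr ⟨hu, hw, h.trans h'⟩

theorem isOpenMap_quot_mk_of_isOpen_saturation (hr : Equivalence r)
    (h : ∀ U : Set Y, IsOpen U → IsOpen {v | ∃ u ∈ U, r u v}) : IsOpenMap (Quot.mk r) := by
  intro U hU
  rw [← isQuotientMap_quot_mk.isOpen_preimage]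
  convert h U hU using 1
  ext v
  simp [hr.quot_mk_eq_iff]

theorem compactSpace_quot_of_isCompact {K : Set Y} (hK : IsCompact K)
    (h : ∀ y, ∃ k ∈ K, r k y) : CompactSpace (Quot r) where
  isCompact_univ := by
    convert hK.image continuous_quot_mk
    refine (eq_univ_of_forall fun x => ?_).symm
    induction x using Quot.ind with
    | mk y => obtain ⟨k, hk, hky⟩ := h y; exact ⟨k, hk, Quot.sound hky⟩

end QuotientMaps

theorem isLocalHomeomorph_of_isOpenMap_of_isLocallyInjective {X Y : Type*} [TopologicalSpace X]
    [TopologicalSpace Y] {f : X → Y} (hc : Continuous f) (ho : IsOpenMap f)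
    (hi : IsLocallyInjective f) : IsLocalHomeomorph f := by
  rw [isLocalHomeomorph_iff_isOpenEmbedding_restrict]
  intro x
  obtain ⟨U, hU, hxU, hinj⟩ := hi x
  exact ⟨U, hU.mem_nhds hxU, .of_continuous_injective_isOpenMap (hc.comp continuous_subtype_val)
    (injOn_iff_injective.mp hinj) (ho.comp hU.isOpenMap_subtype_val)⟩

def heartGlued : Set (ℝ × ℝ) := ({0, -2, 2} : Set ℝ) ×ˢ Ioo 0 2

lemma heartGlued_subset_heartY : heartGlued ⊆ heartY := by
  rintro ⟨x, t⟩ ⟨hx, ht⟩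
  simp only [heartY, mem_union, mem_image, Prod.mk.injEq]
  rcases hx with rfl | rfl | rfl
  · exact Or.inl <| Or.inl <| Or.inl <| Or.inl ⟨t, Ioo_subset_Ico_self ht, rfl, rfl⟩
  · exact Or.inl <| Or.inr ⟨t, Ioo_subset_Ioc_self ht, rfl, rfl⟩
  · exact Or.inr ⟨t, Ioo_subset_Ioc_self ht, rfl, rfl⟩

lemma mem_heartGlued_or {p : ℝ × ℝ} (hp : p ∈ heartY) :
    p ∈ heartGlued ∨ |p.1| = p.2 ∧ p.2 ≤ 2 := by
  simp only [heartY, mem_union, mem_image] at hp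
  rcases hp with ((((⟨t, ht, rfl⟩ | ⟨t, ht, rfl⟩) | ⟨t, ht, rfl⟩) | ⟨t, ht, rfl⟩) | ⟨t, ht, rfl⟩)
  · rcases ht.1.eq_or_lt with rfl | h0
    · exact Or.inr ⟨abs_zero, zero_le_two⟩
    · exact Or.inl ⟨by simp, h0, ht.2⟩
  · exact Or.inr ⟨by simp [abs_of_nonneg ht.1], ht.2⟩
  · exact Or.inr ⟨abs_of_nonneg ht.1, ht.2⟩
  · rcases ht.2.lt_or_eq with h2 | rfl
    · exact Or.inl ⟨by simp, ht.1, h2⟩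
    · exact Or.inr ⟨by norm_num, le_rfl⟩
  · rcases ht.2.lt_or_eq with h2 | rfl
    · exact Or.inl ⟨by simp, ht.1, h2⟩
    · exact Or.inr ⟨by norm_num, le_rfl⟩

lemma abs_fst_ne_snd_of_mem_heartGlued {p : ℝ × ℝ} (hp : p ∈ heartGlued) : |p.1| ≠ p.2 := by
  obtain ⟨hx, ht⟩ := hp
  rcases hx with h | h | h <;> rw [h] <;> norm_num <;> linarith [ht.1, ht.2]

lemma mem_heartClass_iff {w : ℝ × ℝ} {t : ℝ} :
    w ∈ ({((0 : ℝ), t), ((-2 : ℝ), t), ((2 : ℝ), t)} : Set (ℝ × ℝ)) ↔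
      w.1 ∈ ({0, -2, 2} : Set ℝ) ∧ w.2 = t := by
  obtain ⟨x, s⟩ := w
  simp only [mem_insert_iff, mem_singleton_iff, Prod.mk.injEq]
  tauto

lemma heartRel_iff {u v : heartY} :
    heartRel u v ↔
      u = v ∨ ((u : ℝ × ℝ) ∈ heartGlued ∧ (v : ℝ × ℝ) ∈ heartGlued ∧ u.1.2 = v.1.2) := by
  simp only [heartRel, mem_heartClass_iff, heartGlued, mem_prod, mem_Ioo]
  constructor
  · rintro (h | ⟨t, h0, h2, ⟨hu, rfl⟩, hv, hvt⟩)
    · exact Or.inl h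
    · exact Or.inr ⟨⟨hu, h0, h2⟩, ⟨hv, hvt ▸ h0, hvt ▸ h2⟩, hvt.symm⟩
  · rintro (h | ⟨⟨hu, h0, h2⟩, ⟨hv, -⟩, h⟩)
    · exact Or.inl h
    · exact Or.inr ⟨_, h0, h2, ⟨hu, rfl⟩, hv, h.symm⟩

lemma equivalence_heartRel : Equivalence heartRel := by
  have : heartRel = fun u v : heartY => u = v ∨
      ((u : ℝ × ℝ) ∈ heartGlued ∧ (v : ℝ × ℝ) ∈ heartGlued ∧ u.1.2 = v.1.2) := by
    ext u v; exact heartRel_iff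
  exact this ▸ equivalence_eq_or_and_eq _ _

lemma mk_eq_mk_iff_heartRel {u v : heartY} :
    Quot.mk heartRel u = Quot.mk heartRel v ↔ heartRel u v :=
  equivalence_heartRel.quot_mk_eq_iff u v

lemma isOpen_preimage_heartGlued : IsOpen (((↑) : heartY → ℝ × ℝ) ⁻¹' heartGlued) := by
  have : ((↑) : heartY → ℝ × ℝ) ⁻¹' heartGlued = (↑) ⁻¹' {p : ℝ × ℝ | |p.1| ≠ p.2} := by
    ext ⟨p, hp⟩
    exact ⟨abs_fst_ne_snd_of_mem_heartGlued, fun h => (mem_heartGlued_or hp).resolve_right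
      fun h' => h h'.1⟩
  rw [this]
  exact (isOpen_ne_fun (by fun_prop) (by fun_prop)).preimage continuous_subtype_val

lemma isOpenMap_mk_heartRel : IsOpenMap (Quot.mk heartRel) := by
  refine isOpenMap_quot_mk_of_isOpen_saturation equivalence_heartRel fun U hU => ?_
  obtain ⟨W, hW, rfl⟩ := isOpen_induced_iff.mp hU
  have : {v | ∃ u ∈ (↑) ⁻¹' W, heartRel u v} = (↑) ⁻¹' W ∪ ((↑) ⁻¹' heartGlued ∩
      ⋃ c ∈ ({0, -2, 2} : Set ℝ), (↑) ⁻¹' ((fun p : ℝ × ℝ => (c, p.2)) ⁻¹' W)) := by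
    ext v
    simp only [heartRel_iff, mem_ofPred_eq, mem_union, mem_inter_iff, mem_preimage, mem_iUnion]
    constructor
    · rintro ⟨u, hu, rfl | ⟨hug, hvg, huv⟩⟩
      · exact Or.inl hu
      · exact Or.inr ⟨hvg, u.1.1, hug.1, by rwa [← huv]⟩
    · rintro (hv | ⟨hvg, c, hc, hcv⟩)
      · exact ⟨v, hv, Or.inl rfl⟩
      · exact ⟨⟨(c, v.1.2), heartGlued_subset_heartY ⟨hc, hvg.2⟩⟩, hcv,
          Or.inr ⟨⟨hc, hvg.2⟩, hvg, rfl⟩⟩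
  rw [this]
  refine hU.union (isOpen_preimage_heartGlued.inter (isOpen_biUnion fun c _ => ?_))
  exact (hW.preimage (by fun_prop)).preimage continuous_subtype_val

lemma two_le_abs_sub_of_mem_of_ne {a b : ℝ} (ha : a ∈ ({0, -2, 2} : Set ℝ))
    (hb : b ∈ ({0, -2, 2} : Set ℝ)) (hab : a ≠ b) : 2 ≤ |a - b| := by
  obtain rfl | rfl | rfl := ha <;> obtain rfl | rfl | rfl := hb <;>
    first | exact absurd rfl hab | norm_num

lemma eq_of_heartRel_of_dist_lt {u v : heartY} (h : heartRel u v) (hd : dist u v < 2) : u = v := by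
  obtain h | ⟨⟨hu, -⟩, ⟨hv, -⟩, huv⟩ := heartRel_iff.mp h
  · exact h
  have hfst : |u.1.1 - v.1.1| < 2 := (le_max_left _ _).trans_lt hd
  have : u.1.1 = v.1.1 := by
    by_contra hne
    exact (two_le_abs_sub_of_mem_of_ne hu hv hne).not_gt hfst
  exact Subtype.ext (Prod.ext this huv)

lemma isLocalHomeomorph_mk_heartRel : IsLocalHomeomorph (Quot.mk heartRel) := by
  refine isLocalHomeomorph_of_isOpenMap_of_isLocallyInjective continuous_quot_mk
    isOpenMap_mk_heartRel fun y => ⟨Metric.ball y 1, Metric.isOpen_ball,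
      Metric.mem_ball_self one_pos,
      fun u hu v hv h => eq_of_heartRel_of_dist_lt (mk_eq_mk_iff_heartRel.mp h) ?_⟩
  calc dist u v ≤ dist u y + dist v y := dist_triangle_right u v y
    _ < 1 + 1 := add_lt_add hu hv
    _ = 2 := one_add_one_eq_two

lemma mem_heartY_of_abs_eq {x t : ℝ} (h : |x| = t) (h2 : t ≤ 2) : (x, t) ∈ heartY := by
  have ht : t ∈ Icc 0 2 := ⟨h ▸ abs_nonneg x, h2⟩
  rcases abs_eq (h ▸ abs_nonneg x) |>.mp h with rfl | rfl
  · exact Or.inl <| Or.inl <| Or.inr ⟨x, ht, rfl⟩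
  · exact Or.inl <| Or.inl <| Or.inl <| Or.inr ⟨t, ht, rfl⟩

lemma compactSpace_quot_heartRel : CompactSpace (Quot heartRel) := by
  set K : Set (ℝ × ℝ) := {p | |p.1| = p.2 ∧ p.2 ≤ 2} ∪ {0} ×ˢ Icc 0 1 ∪ {2} ×ˢ Icc 1 2
  have hK : IsCompact K := by
    refine (IsCompact.union ?_ (isCompact_singleton.prod isCompact_Icc)).union
      (isCompact_singleton.prod isCompact_Icc)
    refine (isCompact_Icc.prod isCompact_Icc).of_isClosed_subset
      ((isClosed_eq (by fun_prop) (by fun_prop)).inter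
        (isClosed_le continuous_snd continuous_const))
      fun p ⟨h, h2⟩ => ⟨abs_le.mp (h ▸ h2), h ▸ abs_nonneg p.1, h2⟩
  have hKY : K ⊆ heartY := by
    rintro ⟨x, t⟩ ((⟨h, h2⟩ | ⟨rfl, ht⟩) | ⟨rfl, ht⟩)
    · exact mem_heartY_of_abs_eq h h2
    · exact Or.inl <| Or.inl <| Or.inl <| Or.inl ⟨t, ⟨ht.1, by linarith [ht.2]⟩, rfl⟩
    · exact Or.inr ⟨t, ⟨by linarith [ht.1], ht.2⟩, rfl⟩
  refine compactSpace_quot_of_isCompact (K := (↑) ⁻¹' K) ?_ fun y => ?_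
  · rwa [Subtype.isCompact_iff, Subtype.image_preimage_coe, inter_eq_right.mpr hKY]
  rcases mem_heartGlued_or y.2 with ⟨hc, ht⟩ | hy
  · obtain ⟨c, hcB, hcK⟩ : ∃ c ∈ ({0, -2, 2} : Set ℝ), (c, y.1.2) ∈ K := by
      rcases le_or_gt y.1.2 1 with h1 | h1
      · exact ⟨0, by simp, Or.inl (Or.inr ⟨rfl, ht.1.le, h1⟩)⟩
      · exact ⟨2, by simp, Or.inr ⟨rfl, h1.le, ht.2.le⟩⟩
    exact ⟨⟨(c, y.1.2), heartGlued_subset_heartY ⟨hcB, ht⟩⟩, hcK,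
      heartRel_iff.mpr (Or.inr ⟨⟨hcB, ht⟩, ⟨hc, ht⟩, rfl⟩)⟩
  · exact ⟨y, Or.inl (Or.inl hy), equivalence_heartRel.refl y⟩

lemma mul_four_sub_sq_eq_zero_iff {x : ℝ} : x * (4 - x ^ 2) = 0 ↔ x ∈ ({0, -2, 2} : Set ℝ) := by
  have : x * (4 - x ^ 2) = -(x * (x + 2) * (x - 2)) := by ring
  simp only [this, neg_eq_zero, mul_eq_zero, add_eq_zero_iff_eq_neg, sub_eq_zero, mem_insert_iff,
    mem_singleton_iff, or_assoc]

def heartFold (p : ℝ × ℝ) : ℝ × ℝ := (p.1 * (4 - p.1 ^ 2), p.2)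

lemma heartFold_mem_iff {p : ℝ × ℝ} :
    heartFold p ∈ ({0} : Set ℝ) ×ˢ Ioo 0 2 ↔ p ∈ heartGlued := by
  simp only [heartFold, heartGlued, mem_prod, mem_singleton_iff, mul_four_sub_sq_eq_zero_iff]

lemma heartFold_eq_of_heartRel {u v : heartY} (h : heartRel u v) :
    heartFold u = heartFold v := by
  obtain rfl | ⟨hu, hv, huv⟩ := heartRel_iff.mp h
  · rfl
  · have hu0 := (heartFold_mem_iff.mpr hu).1
    have hv0 := (heartFold_mem_iff.mpr hv).1
    exact Prod.ext (hu0.trans hv0.symm) huv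

lemma heartRel_or_of_heartFold_eq {u v : heartY} (h : heartFold u = heartFold v) :
    heartRel u v ∨ (u.1.2 = 2 ∧ v.1.2 = 2) := by
  obtain ⟨hfst, hsnd⟩ := Prod.ext_iff.mp h
  simp only [heartFold] at hfst hsnd
  by_cases hu : (u : ℝ × ℝ) ∈ heartGlued
  · have hv := heartFold_mem_iff.mp (h ▸ heartFold_mem_iff.mpr hu)
    exact Or.inl (heartRel_iff.mpr (Or.inr ⟨hu, hv, hsnd⟩))
  have hv : (v : ℝ × ℝ) ∉ heartGlued := fun hv =>
    hu (heartFold_mem_iff.mp (h ▸ heartFold_mem_iff.mpr hv))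
  obtain ⟨hu1, -⟩ := (mem_heartGlued_or u.2).resolve_left hu
  obtain ⟨hv1, -⟩ := (mem_heartGlued_or v.2).resolve_left hv
  have heq : u.1.1 = v.1.1 → heartRel u v := fun h1 =>
    heartRel_iff.mpr (Or.inl (Subtype.ext (Prod.ext h1 hsnd)))
  rcases abs_eq_abs.mp (hu1.trans (hsnd.trans hv1.symm)) with h1 | h1
  · exact Or.inl (heq h1)
  -- `x ↦ x (4 - x²)` is odd, so `u.1.1 = -v.1.1` forces both onto its zeros `0, ±2`.
  have hv0 : v.1.1 ∈ ({0, -2, 2} : Set ℝ) := by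
    rw [h1] at hfst
    exact mul_four_sub_sq_eq_zero_iff.mp (by linear_combination (-1 / 2 : ℝ) * hfst)
  obtain h0 | h2 | h2 := hv0
  · exact Or.inl (heq (by rw [h1, h0, neg_zero]))
  all_goals
    refine Or.inr ⟨hsnd.trans ?_, ?_⟩ <;> rw [← hv1, h2] <;> norm_num

lemma isOpen_compl_singleton_mk {w : heartY} (hw : (w : ℝ × ℝ) ∉ heartGlued) :
    IsOpen {Quot.mk heartRel w}ᶜ := by
  rw [← isQuotientMap_quot_mk.isOpen_preimage]
  convert isOpen_compl_singleton (x := w) using 1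
  ext v
  simp [mk_eq_mk_iff_heartRel, heartRel_iff, hw]

lemma fst_eq_neg_of_snd_eq_two {u w : heartY} (hu : u.1.2 = 2) (hw : w.1.2 = 2) (hne : u ≠ w) :
    u.1.1 = -w.1.1 := by
  have habs (z : heartY) (hz : z.1.2 = 2) : |z.1.1| = 2 :=
    ((mem_heartGlued_or z.2).resolve_left fun h => h.2.2.ne hz).1.trans hz
  refine (abs_eq_abs.mp ((habs u hu).trans (habs w hw).symm)).resolve_left fun h => hne ?_
  exact Subtype.ext (Prod.ext h (hu.trans hw.symm))

lemma t2Space_compl_singleton_mk {w : heartY} (hw : w.1.2 = 2) :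
    T2Space ↥({Quot.mk heartRel w}ᶜ : Set (Quot heartRel)) := by
  let G : Quot heartRel → ℝ × ℝ :=
    Quot.lift (fun u => heartFold u) fun _ _ => heartFold_eq_of_heartRel
  have hG : Continuous G := continuous_quot_lift _ (by unfold heartFold; fun_prop)
  refine .of_injective_continuous (f := G ∘ (↑)) ?_ (hG.comp continuous_subtype_val)
  rintro ⟨x, hx⟩ ⟨y, hy⟩ hxy
  obtain ⟨u, rfl⟩ := Quot.exists_rep x
  obtain ⟨v, rfl⟩ := Quot.exists_rep y
  refine Subtype.ext (Quot.sound ?_)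
  rcases heartRel_or_of_heartFold_eq hxy with h | ⟨hu, hv⟩
  · exact h
  have huw : u ≠ w := fun h => hx (congrArg _ h)
  have hvw : v ≠ w := fun h => hy (congrArg _ h)
  exact Or.inl (Subtype.ext (Prod.ext ((fst_eq_neg_of_snd_eq_two hu hw huw).trans
    (fst_eq_neg_of_snd_eq_two hv hw hvw).symm) (hu.trans hv.symm)))

lemma exists_ne_mk_of_snd_eq_two (x : Quot heartRel) :
    ∃ w : heartY, w.1.2 = 2 ∧ x ≠ Quot.mk heartRel w := by
  let tip (c : ℝ) (hc : |c| = 2) : heartY := ⟨(c, 2), mem_heartY_of_abs_eq hc le_rfl⟩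
  have hne :
      Quot.mk heartRel (tip 2 (by norm_num)) ≠ Quot.mk heartRel (tip (-2) (by norm_num)) := by
    rw [Ne, mk_eq_mk_iff_heartRel, heartRel_iff]
    rintro (h | ⟨⟨-, -, h⟩, -⟩)
    · norm_num [tip] at h
    · exact lt_irrefl _ h
  rcases hne.ne_or_ne x with h | h <;> exact ⟨_, rfl, h.symm⟩

/-- `r` is an equivalence relation on `Y`, the quotient map
`q : Y → X = Y/r` (the broken heart, with the quotient topology) is a surjective local
homeomorphism, `X` is compact, and `X` is locally Hausdorff: every point of `X` has an
open neighborhood which is Hausdorff in the subspace topology. -/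
theorem stmt_18 :
    Equivalence heartRel ∧
    Function.Surjective (Quot.mk heartRel) ∧
    IsLocalHomeomorph (Quot.mk heartRel) ∧
    CompactSpace (Quot heartRel) ∧
    (∀ x : Quot heartRel, ∃ O : Set (Quot heartRel), IsOpen O ∧ x ∈ O ∧ T2Space ↥O) := by
  refine ⟨equivalence_heartRel, Quot.exists_rep, isLocalHomeomorph_mk_heartRel,
    compactSpace_quot_heartRel, fun x => ?_⟩
  obtain ⟨w, hw, hxw⟩ := exists_ne_mk_of_snd_eq_two x
  exact ⟨_, isOpen_compl_singleton_mk fun h => h.2.2.ne hw, hxw, t2Space_compl_singleton_mk hw⟩
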